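/- arXiv:2001.04838 — 2 statements merged into one kernel-verified Lean document; each statement's English description precedes it below -/
import Mathlib

section
/- Let p be an odd prime. Then F(1) = H₂(−1)² − p·φ(−1) and F(−1) = φ(−1)·H₂(1)² − p·φ(−1); equivalently, φ(−1)F(1) = p²φ(−1)·₂F₁(φ,φ;ε|−1)² − p and φ(−1)F(−1) = p²·₂F₁(φ,φ;ε|1)² − p. -/
/-!
Both `F(1)` and `H₂(-1)²` are double sums `∑_{x,y} G(x + y, xy)`; for `H₂(-1)²` because
`φ(u)φ(1-u)φ(1+u) · φ(v)φ(1-v)φ(1+v)` depends only on `u + v` and `uv`. The pair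
`(s, q) = (x + y, xy)` is attained `1 + φ(s² - 4q)` times, so each double sum splits into a plain
sum over `(s, q)` and one weighted by `φ(s² - 4q)`. Both plain parts equal `p`, by repeated use of
`∑_w φ(w - a) φ(w - b) = -1` for `a ≠ b`. Linear changes of variables turn the weighted parts into
sums of values of `H₂`: `φ(-1) H₃(1)` for `F(1)`, and `p φ(-1) + φ(-1) H₃(1)` for `H₂(-1)²`, where
`H₃(1) = ∑_v φ(v) φ(1-v) H₂(v)`; the second needs the substitution `t = (1 - r)/(1 + r)`, which
turns `4t/(1 + t)²` into `1 - r²`. Subtracting gives `F(1)`. For `a = -1` the summand collapses to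
`φ(xy) φ(x + y)²`, whose sum is `-φ(-1)(p - 1)`, and `H₂(1) = -1`.
-/

open Finset

/-- The quadratic character of `ZMod p`, with values in `ℂ` (vanishing at `0`). -/
noncomputable def Φ (p : ℕ) [Fact p.Prime] : MulChar (ZMod p) ℂ :=
  (quadraticChar (ZMod p)).ringHomComp (Int.castRingHom ℂ)

/-- `H₂(x) = Σ_u φ(u) φ(1-u) φ(1-xu)`, so that `₂F₁(φ,φ;ε|x) = φ(-1) H₂(x) / p`. -/
noncomputable def H₂ (p : ℕ) [Fact p.Prime] (x : ZMod p) : ℂ :=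
  ∑ u : ZMod p, Φ p u * Φ p (1 - u) * Φ p (1 - x * u)

/-- `F(a) = Σ_{x,y ∈ 𝔽_p^×} φ(x+y+a+1) φ(x⁻¹+y⁻¹+a⁻¹+1)`. -/
noncomputable def Fsum (p : ℕ) [Fact p.Prime] (a : ZMod p) : ℂ :=
  ∑ x ∈ univ.filter (fun x : ZMod p => x ≠ 0),
    ∑ y ∈ univ.filter (fun y : ZMod p => y ≠ 0),
      Φ p (x + y + a + 1) * Φ p (x⁻¹ + y⁻¹ + a⁻¹ + 1)

section

variable {F : Type*} [Field F] [Fintype F]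

theorem sum_comp_mul_add {M : Type*} [AddCommMonoid M] {a : F} (ha : a ≠ 0) (b : F)
    (f : F → M) : ∑ z, f (a * z + b) = ∑ z, f z :=
  Fintype.sum_equiv ((Equiv.mulLeft₀ a ha).trans (Equiv.addRight b)) _ _ fun _ => rfl

theorem sum_filter_ne_neg_one_comp_one_sub_div_one_add [DecidableEq F] (hF : ringChar F ≠ 2)
    {M : Type*} [AddCommMonoid M] (g : F → M) :
    ∑ r ∈ univ.filter (· ≠ -1), g ((1 - r) / (1 + r)) =
      ∑ t ∈ univ.filter (· ≠ -1), g t := by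
  have h2 : (2 : F) ≠ 0 := Ring.two_ne_zero hF
  have hadd : ∀ {r : F}, r ≠ -1 → 1 + r ≠ 0 := fun hr h => hr (by linear_combination h)
  have hmaps : ∀ {r : F}, r ≠ -1 → (1 - r) / (1 + r) ≠ -1 := fun hr h => h2 <| by
    rw [div_eq_iff (hadd hr)] at h; linear_combination h
  have hinv : ∀ {r : F}, r ≠ -1 → (1 - (1 - r) / (1 + r)) / (1 + (1 - r) / (1 + r)) = r :=
    fun hr => by
      rw [one_sub_div (hadd hr), one_add_div (hadd hr), div_div_div_cancel_right₀ (hadd hr),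
        div_eq_iff (by ring_nf; exact h2)]
      ring
  refine sum_nbij' (fun r => (1 - r) / (1 + r)) (fun r => (1 - r) / (1 + r)) ?_ ?_ ?_ ?_
    fun _ _ => rfl
  all_goals intro r hr; simp only [mem_filter, mem_univ, true_and] at hr ⊢
  exacts [hmaps hr, hmaps hr, hinv hr, hinv hr]

end

namespace MulChar

variable {F R : Type*} [Field F] [CommRing R] {χ : MulChar F R}

theorem IsQuadratic.apply_mul_self (hχ : χ.IsQuadratic) {a : F} (ha : a ≠ 0) :
    χ a * χ a = 1 := by
  simpa [sq, pow_apply' _ two_ne_zero, one_apply (Ne.isUnit ha)] using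
    DFunLike.congr_fun hχ.sq_eq_one a

theorem IsQuadratic.apply_inv (hχ : χ.IsQuadratic) (a : F) : χ a⁻¹ = χ a := by
  rw [← inv_apply', hχ.inv]

variable [Fintype F]

theorem sum_apply_mul_self (hχ : χ.IsQuadratic) : ∑ a, χ a * χ a = Fintype.card F - 1 := by
  classical
  rw [← sum_erase_add _ _ (mem_univ 0), χ.map_zero, mul_zero, add_zero,
    sum_congr rfl fun a ha => hχ.apply_mul_self (ne_of_mem_erase ha), sum_const,
    card_erase_of_mem (mem_univ _), card_univ, nsmul_one, Nat.cast_sub Fintype.card_pos,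
    Nat.cast_one]

variable (χ) in
theorem sum_comp_sq [DecidableEq F] (hF : ringChar F ≠ 2)
    (hχ : ∀ a, χ a = quadraticChar F a) (f : F → R) :
    ∑ r, f (r ^ 2) = ∑ w, (1 + χ w) * f w := by
  rw [← sum_fiberwise univ (· ^ 2) (fun r => f (r ^ 2))]
  refine sum_congr rfl fun w _ => ?_
  have hcard : (#{r | r ^ 2 = w} : R) = 1 + χ w := by
    have h := quadraticChar_card_sqrts hF w
    rw [Set.toFinset_ofPred] at h
    rw [hχ, ← Int.cast_natCast, h]
    push_cast
    ring
  rw [sum_congr rfl fun r hr => by rw [(mem_filter.mp hr).2], sum_const, nsmul_eq_mul, hcard]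

variable (χ) in
theorem sum_sum_add_mul [DecidableEq F] (hF : ringChar F ≠ 2)
    (hχ : ∀ a, χ a = quadraticChar F a) (g : F → F → R) :
    ∑ x, ∑ y, g (x + y) (x * y) = ∑ s, ∑ q, (1 + χ (s ^ 2 - 4 * q)) * g s q := by
  have h2 : (2 : F) ≠ 0 := Ring.two_ne_zero hF
  have h4 : (4 : F) ≠ 0 := by
    rw [show (4 : F) = 2 * 2 by norm_num]; exact mul_ne_zero h2 h2
  calc ∑ x, ∑ y, g (x + y) (x * y) = ∑ x, ∑ s, g s (x * (s - x)) :=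
        sum_congr rfl fun x _ => Fintype.sum_equiv (Equiv.addLeft x) _ _ fun y => by
          rw [Equiv.coe_addLeft, add_sub_cancel_left]
    _ = ∑ s, ∑ x, g s (x * (s - x)) := sum_comm
    _ = ∑ s, ∑ r, g s ((s ^ 2 - r ^ 2) / 4) := by
        refine sum_congr rfl fun s _ => ?_
        rw [← sum_comp_mul_add (inv_ne_zero h2) (2⁻¹ * s)]
        refine sum_congr rfl fun r _ => ?_
        congr 1
        field_simp
        ring
    _ = ∑ s, ∑ w, (1 + χ w) * g s ((s ^ 2 - w) / 4) :=
        sum_congr rfl fun s _ => sum_comp_sq χ hF hχ fun w => g s ((s ^ 2 - w) / 4)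
    _ = ∑ s, ∑ q, (1 + χ (s ^ 2 - 4 * q)) * g s q := by
        refine sum_congr rfl fun s _ => ?_
        rw [← sum_comp_mul_add (neg_ne_zero.mpr h4) (s ^ 2)]
        refine sum_congr rfl fun q _ => ?_
        rw [show -4 * q + s ^ 2 = s ^ 2 - 4 * q by ring]
        congr 2
        field_simp
        ring

variable [IsDomain R]

theorem IsQuadratic.jacobiSum_self (hχ : χ.IsQuadratic) (hχ1 : χ ≠ 1) :
    jacobiSum χ χ = -χ (-1) := by
  simpa only [hχ.inv] using jacobiSum_nontrivial_inv hχ1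

variable (χ) in
theorem sum_eq_apply_sub_of_forall_ne (hχ1 : χ ≠ 1) {f : F → R} {t₀ b : F} {c : R}
    (hf : ∀ t ≠ t₀, f t = χ (t + b) * c) : ∑ t, f t = f t₀ - χ (t₀ + b) * c := by
  have hχsum : ∑ t, χ (t + b) * c = 0 := by
    rw [← sum_mul, Fintype.sum_equiv (Equiv.addRight b) (fun t => χ (t + b)) χ fun _ => rfl,
      sum_eq_zero_of_ne_one hχ1, zero_mul]
  calc ∑ t, f t = ∑ t, (f t - χ (t + b) * c) := by rw [sum_sub_distrib, hχsum, sub_zero]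
    _ = f t₀ - χ (t₀ + b) * c :=
      sum_eq_single t₀ (fun t _ ht => by rw [hf t ht, sub_self]) (by simp)

theorem sum_apply_sub_mul_apply_sub (hχ : χ.IsQuadratic) (hχ1 : χ ≠ 1) {a b : F}
    (hab : a ≠ b) : ∑ w, χ (w - a) * χ (w - b) = -1 := by
  have hc : b - a ≠ 0 := sub_ne_zero.mpr hab.symm
  rw [← sum_comp_mul_add hc a]
  calc ∑ x, χ ((b - a) * x + a - a) * χ ((b - a) * x + a - b)
      = ∑ x, χ (-1) * (χ x * χ (1 - x)) := by
        refine sum_congr rfl fun x _ => ?_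
        rw [show (b - a) * x + a - a = (b - a) * x by ring,
          show (b - a) * x + a - b = (b - a) * (-1 * (1 - x)) by ring,
          map_mul, map_mul, map_mul]
        linear_combination χ x * χ (-1) * χ (1 - x) * hχ.apply_mul_self hc
    _ = -1 := by
      rw [← mul_sum, ← jacobiSum, hχ.jacobiSum_self hχ1, mul_neg,
        hχ.apply_mul_self (neg_ne_zero.mpr one_ne_zero)]

theorem sum_apply_mul_apply_one_sub_mul (hχ : χ.IsQuadratic) (hχ1 : χ ≠ 1) (u : F) :
    ∑ v, χ v * χ (1 - v * u) = -χ (-1) * χ u := by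
  rcases eq_or_ne u 0 with rfl | hu
  · simp [sum_eq_zero_of_ne_one hχ1]
  rw [← sum_comp_mul_add (inv_ne_zero hu) 0]
  calc ∑ z, χ (u⁻¹ * z + 0) * χ (1 - (u⁻¹ * z + 0) * u)
      = ∑ z, χ u * (χ z * χ (1 - z)) := by
        refine sum_congr rfl fun z _ => ?_
        rw [add_zero, show u⁻¹ * z * u = z by field_simp, map_mul, hχ.apply_inv]
        ring
    _ = -χ (-1) * χ u := by rw [← mul_sum, ← jacobiSum, hχ.jacobiSum_self hχ1]; ring

theorem sum_sum_mul_add_two_mul_add_two_mul (hχ : χ.IsQuadratic) (hχ1 : χ ≠ 1)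
    (hF : ringChar F ≠ 2) :
    ∑ s, ∑ q, χ q * (χ (s + 2) * χ (s + 2 * q)) = Fintype.card F := by
  have h2 : (2 : F) ≠ 0 := Ring.two_ne_zero hF
  have hinner : ∀ s ≠ 0, ∑ q, χ q * (χ (s + 2) * χ (s + 2 * q)) = χ (s + 2) * -χ 2 := by
    intro s hs
    have hne : (0 : F) ≠ -s / 2 := by
      rw [ne_comm, div_ne_zero_iff]; exact ⟨neg_ne_zero.mpr hs, h2⟩
    calc ∑ q, χ q * (χ (s + 2) * χ (s + 2 * q))
        = χ (s + 2) * χ 2 * ∑ q, χ (q - 0) * χ (q - -s / 2) := by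
          rw [mul_sum]
          refine sum_congr rfl fun q _ => ?_
          rw [show s + 2 * q = 2 * (q - -s / 2) by field_simp; ring, map_mul, sub_zero]
          ring
      _ = χ (s + 2) * -χ 2 := by rw [sum_apply_sub_mul_apply_sub hχ hχ1 hne]; ring
  have hzero : ∑ q, χ q * (χ (0 + 2) * χ (0 + 2 * q)) = Fintype.card F - 1 := by
    rw [← sum_apply_mul_self hχ]
    refine sum_congr rfl fun q _ => ?_
    rw [zero_add, zero_add, map_mul]
    linear_combination χ q * χ q * hχ.apply_mul_self h2
  rw [sum_eq_apply_sub_of_forall_ne χ hχ1 hinner, hzero, zero_add]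
  linear_combination hχ.apply_mul_self h2

theorem sum_sum_mul_one_sub_add_mul_one_add_add (hχ : χ.IsQuadratic) (hχ1 : χ ≠ 1)
    (hF : ringChar F ≠ 2) :
    ∑ s, ∑ t, χ t * (χ (1 - s + t) * χ (1 + s + t)) = Fintype.card F := by
  have h2 : (2 : F) ≠ 0 := Ring.two_ne_zero hF
  have hm1 : (-1 : F) ≠ 0 := neg_ne_zero.mpr one_ne_zero
  have hinner : ∀ t ≠ -1,
      ∑ s, χ t * (χ (1 - s + t) * χ (1 + s + t)) = χ (t + 0) * -χ (-1) := by
    intro t ht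
    have hne : 1 + t ≠ -(1 + t) := fun h => ht <| by
      have h' : 2 * (1 + t) = 0 := by linear_combination h
      linear_combination (mul_eq_zero.mp h').resolve_left h2
    calc ∑ s, χ t * (χ (1 - s + t) * χ (1 + s + t))
        = χ t * χ (-1) * ∑ s, χ (s - (1 + t)) * χ (s - -(1 + t)) := by
          rw [mul_sum]
          refine sum_congr rfl fun s _ => ?_
          rw [show 1 - s + t = -1 * (s - (1 + t)) by ring, show 1 + s + t = s - -(1 + t) by ring,
            map_mul]
          ring
      _ = χ (t + 0) * -χ (-1) := by rw [sum_apply_sub_mul_apply_sub hχ hχ1 hne, add_zero]; ring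
  have hneg : ∑ s, χ (-1) * (χ (1 - s + -1) * χ (1 + s + -1)) = Fintype.card F - 1 := by
    rw [← sum_apply_mul_self hχ]
    refine sum_congr rfl fun s _ => ?_
    rw [show 1 - s + -1 = -1 * s by ring, show 1 + s + -1 = s by ring, map_mul]
    linear_combination χ s * χ s * hχ.apply_mul_self hm1
  rw [sum_comm, sum_eq_apply_sub_of_forall_ne χ hχ1 hinner, hneg, add_zero]
  linear_combination hχ.apply_mul_self hm1

theorem sum_mul_sum_apply_sub_four_mul_mul_apply_one_add_sq_sub (hχ : χ.IsQuadratic)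
    (hχ1 : χ ≠ 1) :
    ∑ t, χ t * ∑ w, χ (w - 4 * t) * χ ((1 + t) ^ 2 - w) = Fintype.card F * χ (-1) := by
  have hinner : ∀ t ≠ 1,
      χ t * ∑ w, χ (w - 4 * t) * χ ((1 + t) ^ 2 - w) = χ (t + 0) * -χ (-1) := by
    intro t ht
    have hne : 4 * t ≠ (1 + t) ^ 2 := fun h => ht <| by
      have h' : (t - 1) ^ 2 = 0 := by linear_combination -h
      linear_combination pow_eq_zero_iff two_ne_zero |>.mp h'
    calc χ t * ∑ w, χ (w - 4 * t) * χ ((1 + t) ^ 2 - w)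
        = χ t * χ (-1) * ∑ w, χ (w - 4 * t) * χ (w - (1 + t) ^ 2) := by
          rw [mul_sum, mul_sum]
          refine sum_congr rfl fun w _ => ?_
          rw [show (1 + t) ^ 2 - w = -1 * (w - (1 + t) ^ 2) by ring, map_mul]
          ring
      _ = χ (t + 0) * -χ (-1) := by rw [sum_apply_sub_mul_apply_sub hχ hχ1 hne, add_zero]; ring
  have hone : χ 1 * ∑ w, χ (w - 4 * 1) * χ ((1 + 1) ^ 2 - w)
      = χ (-1) * (Fintype.card F - 1) := by
    rw [← sum_apply_mul_self hχ,
      ← Fintype.sum_equiv (Equiv.subRight 4) _ (fun w => χ w * χ w) fun _ => rfl,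
      χ.map_one, one_mul, mul_sum]
    refine sum_congr rfl fun w _ => ?_
    rw [Equiv.subRight_apply, show (1 + 1) ^ 2 - w = -1 * (w - 4 * 1) by ring, map_mul, mul_one]
    ring
  rw [sum_eq_apply_sub_of_forall_ne χ hχ1 hinner, hone, add_zero, χ.map_one]
  ring

theorem sum_sum_apply_mul_mul_apply_add_mul_self (hχ : χ.IsQuadratic) (hχ1 : χ ≠ 1) :
    ∑ x, ∑ y, χ (x * y) * (χ (x + y) * χ (x + y)) = -χ (-1) * (Fintype.card F - 1) := by
  have hinner : ∀ x,
      ∑ y, χ (x * y) * (χ (x + y) * χ (x + y)) = -χ (-1) * (χ x * χ x) := by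
    intro x
    have hoff : ∀ y ≠ -x, χ (x * y) * (χ (x + y) * χ (x + y)) = χ (y + 0) * χ x := by
      intro y hy
      rw [hχ.apply_mul_self fun h => hy (by linear_combination h), map_mul, add_zero]
      ring
    rw [sum_eq_apply_sub_of_forall_ne χ hχ1 hoff, add_neg_cancel, χ.map_zero, mul_zero, mul_zero,
      zero_sub, add_zero, show -x = -1 * x by ring, map_mul]
    ring
  rw [sum_congr rfl fun x _ => hinner x, ← mul_sum, sum_apply_mul_self hχ]

end MulChar

open MulChar

/-- The sum one step beyond `H₂ p x = ∑ u, φ u * φ (1 - u) * φ (1 - x * u)`; up to normalisation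
`H₃ p 1` is Greene's `₃F₂(φ, φ, φ; ε, ε | 1)`. -/
noncomputable def H₃ (p : ℕ) [Fact p.Prime] (x : ZMod p) : ℂ :=
  ∑ v : ZMod p, Φ p v * Φ p (1 - v) * H₂ p (x * v)

theorem Φ_isQuadratic (p : ℕ) [Fact p.Prime] : (Φ p).IsQuadratic :=
  (quadraticChar_isQuadratic _).comp _

section

variable {p : ℕ} [Fact p.Prime]

local notation "φ" => Φ p

theorem ringChar_zmod_ne_two (hp : Odd p) : ringChar (ZMod p) ≠ 2 := by
  rw [ZMod.ringChar_zmod_n]; rintro rfl; exact Nat.not_odd_iff_even.mpr even_two hp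

theorem Φ_ne_one (hp : Odd p) : Φ p ≠ 1 :=
  (ringHomComp_ne_one_iff Int.cast_injective).mpr
    (quadraticChar_ne_one (ringChar_zmod_ne_two hp))

theorem Fsum_eq_sum_sum (a : ZMod p) :
    Fsum p a =
      ∑ x, ∑ y, φ (x * y) * (φ (x + y + a + 1) * φ (x + y + (a⁻¹ + 1) * (x * y))) := by
  rw [Fsum, sum_filter]
  refine sum_congr rfl fun x _ => ?_
  split_ifs with hx
  · rw [sum_filter]
    refine sum_congr rfl fun y _ => ?_
    split_ifs with hy
    · rw [show x⁻¹ + y⁻¹ + a⁻¹ + 1 = (x + y + (a⁻¹ + 1) * (x * y)) * (x * y)⁻¹ by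
        field_simp; ring, map_mul, (Φ_isQuadratic p).apply_inv]
      ring
    · simp [not_not.mp hy]
  · simp [not_not.mp hx]

theorem H₂_one (hp : Odd p) : H₂ p 1 = -1 := by
  have hoff : ∀ u ≠ 1, φ u * φ (1 - u) * φ (1 - 1 * u) = φ (u + 0) * 1 := fun u hu => by
    rw [one_mul, mul_assoc, (Φ_isQuadratic p).apply_mul_self (sub_ne_zero.mpr (Ne.symm hu)),
      add_zero]
  rw [H₂, sum_eq_apply_sub_of_forall_ne φ (Φ_ne_one hp) hoff]
  simp

theorem sum_apply_mul_apply_sub_mul_apply_sub_eq_H₂ {a b : ZMod p} (ha : a ≠ 0) (hb : b ≠ 0) :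
    ∑ w, φ w * φ (w - a) * φ (w - b) = φ b * H₂ p (a / b) := by
  have hχ := Φ_isQuadratic p
  have hm1 : (-1 : ZMod p) ≠ 0 := neg_ne_zero.mpr one_ne_zero
  rw [H₂, mul_sum, ← sum_comp_mul_add ha 0]
  refine sum_congr rfl fun u _ => ?_
  rw [add_zero, show a * u - a = a * (-1 * (1 - u)) by ring,
    show a * u - b = -1 * b * (1 - a / b * u) by field_simp; ring]
  simp only [map_mul]
  linear_combination φ u * φ (1 - u) * φ b * φ (1 - a / b * u) *
    (φ (-1) * φ (-1) * hχ.apply_mul_self ha + hχ.apply_mul_self hm1)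

theorem sum_apply_mul_H₂ (hp : Odd p) : ∑ v, φ v * H₂ p v = φ (-1) := by
  have hm1 : (-1 : ZMod p) ≠ 0 := neg_ne_zero.mpr one_ne_zero
  have hoff : ∀ u ≠ 0, φ u * φ u * φ (1 - u) = φ (u + -1) * φ (-1) := fun u hu => by
    rw [(Φ_isQuadratic p).apply_mul_self hu, one_mul, ← map_mul]
    ring_nf
  calc ∑ v, φ v * H₂ p v = ∑ u, φ u * φ (1 - u) * ∑ v, φ v * φ (1 - v * u) := by
        simp only [H₂, mul_sum]
        rw [sum_comm]
        exact sum_congr rfl fun u _ => sum_congr rfl fun v _ => by ring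
    _ = -φ (-1) * ∑ u, φ u * φ u * φ (1 - u) := by
        rw [mul_sum]
        refine sum_congr rfl fun u _ => ?_
        rw [sum_apply_mul_apply_one_sub_mul (Φ_isQuadratic p) (Φ_ne_one hp)]
        ring
    _ = φ (-1) := by
        rw [sum_eq_apply_sub_of_forall_ne φ (Φ_ne_one hp) hoff, (Φ p).map_zero, zero_add,
          (Φ_isQuadratic p).apply_mul_self hm1]
        ring

theorem sum_discrim_mul_mul_add_two_mul_eq_H₂ (hp : Odd p) (s : ZMod p) :
    ∑ q, φ (s ^ 2 - 4 * q) * (φ q * φ (s + 2 * q)) = φ s * H₂ p (-s / 2) := by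
  have hχ := Φ_isQuadratic p
  have h2 : (2 : ZMod p) ≠ 0 := Ring.two_ne_zero (ringChar_zmod_ne_two hp)
  have hm1 : (-1 : ZMod p) ≠ 0 := neg_ne_zero.mpr one_ne_zero
  rcases eq_or_ne s 0 with rfl | hs
  · have hoff : ∀ q ≠ 0, φ (0 ^ 2 - 4 * q) * (φ q * φ (0 + 2 * q)) = φ (q + 0) * φ (-8) :=
      fun q hq => by
        rw [show (0 : ZMod p) ^ 2 - 4 * q = -4 * q by ring,
          show (0 : ZMod p) + 2 * q = 2 * q by ring, show (-8 : ZMod p) = -4 * 2 by norm_num,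
          add_zero]
        simp only [map_mul]
        linear_combination φ (-4) * φ 2 * φ q * hχ.apply_mul_self hq
    rw [sum_eq_apply_sub_of_forall_ne φ (Φ_ne_one hp) hoff]
    simp
  have hb : -s / 2 ≠ 0 := div_ne_zero (neg_ne_zero.mpr hs) h2
  have h4 : (4 : ZMod p) ≠ 0 := by
    rw [show (4 : ZMod p) = 2 * 2 by norm_num]; exact mul_ne_zero h2 h2
  have ha : s ^ 2 / 4 ≠ 0 := div_ne_zero (pow_ne_zero 2 hs) h4
  calc ∑ q, φ (s ^ 2 - 4 * q) * (φ q * φ (s + 2 * q))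
      = φ (-1) * φ 2 * ∑ q, φ q * φ (q - s ^ 2 / 4) * φ (q - -s / 2) := by
        rw [mul_sum]
        refine sum_congr rfl fun q _ => ?_
        rw [show s ^ 2 - 4 * q = -1 * (2 * 2) * (q - s ^ 2 / 4) by field_simp; ring,
          show s + 2 * q = 2 * (q - -s / 2) by field_simp; ring]
        simp only [map_mul]
        linear_combination φ (-1) * φ 2 * φ (q - s ^ 2 / 4) * φ q * φ (q - -s / 2) *
          hχ.apply_mul_self h2
    _ = φ s * H₂ p (-s / 2) := by
        rw [sum_apply_mul_apply_sub_mul_apply_sub_eq_H₂ ha hb,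
          show s ^ 2 / 4 / (-s / 2) = -s / 2 by field_simp; ring,
          show -s / 2 = -1 * s * 2⁻¹ by ring, map_mul, map_mul, hχ.apply_inv]
        linear_combination φ s * H₂ p (-1 * s * 2⁻¹) *
          (φ 2 * φ 2 * hχ.apply_mul_self hm1 + hχ.apply_mul_self h2)

theorem sum_sum_discrim_mul_mul_add_two_mul_add_two_mul (hp : Odd p) :
    ∑ s, ∑ q, φ (s ^ 2 - 4 * q) * (φ q * (φ (s + 2) * φ (s + 2 * q))) =
      φ (-1) * H₃ p 1 := by
  have h2 : (2 : ZMod p) ≠ 0 := Ring.two_ne_zero (ringChar_zmod_ne_two hp)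
  calc ∑ s, ∑ q, φ (s ^ 2 - 4 * q) * (φ q * (φ (s + 2) * φ (s + 2 * q)))
      = ∑ s, φ (s + 2) * (φ s * H₂ p (-s / 2)) := by
        refine sum_congr rfl fun s _ => ?_
        rw [← sum_discrim_mul_mul_add_two_mul_eq_H₂ hp s, mul_sum]
        exact sum_congr rfl fun q _ => by ring
    _ = ∑ v, φ (-2 * v + 0 + 2) * (φ (-2 * v + 0) * H₂ p (-(-2 * v + 0) / 2)) :=
        (sum_comp_mul_add (neg_ne_zero.mpr h2) 0 _).symm
    _ = φ (-1) * H₃ p 1 := by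
        rw [H₃, mul_sum]
        refine sum_congr rfl fun v _ => ?_
        rw [show -(-2 * v + 0) / 2 = 1 * v by field_simp; ring,
          show -2 * v + 0 + 2 = 2 * (1 - v) by ring, show -2 * v + 0 = -1 * 2 * v by ring]
        simp only [map_mul, one_mul]
        linear_combination
          φ (-1) * φ v * φ (1 - v) * H₂ p v * (Φ_isQuadratic p).apply_mul_self h2

theorem sum_mul_sub_four_mul_mul_one_add_sq_sub_eq_H₂ (hp : Odd p) {t : ZMod p} (ht0 : t ≠ 0)
    (ht1 : t ≠ -1) :
    ∑ w, φ w * (φ (w - 4 * t) * φ ((1 + t) ^ 2 - w)) =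
      φ (-1) * H₂ p (4 * t / (1 + t) ^ 2) := by
  have h2 : (2 : ZMod p) ≠ 0 := Ring.two_ne_zero (ringChar_zmod_ne_two hp)
  have h4 : (4 : ZMod p) ≠ 0 := by
    rw [show (4 : ZMod p) = 2 * 2 by norm_num]; exact mul_ne_zero h2 h2
  have hu : 1 + t ≠ 0 := fun h => ht1 (by linear_combination h)
  calc ∑ w, φ w * (φ (w - 4 * t) * φ ((1 + t) ^ 2 - w))
      = φ (-1) * ∑ w, φ w * φ (w - 4 * t) * φ (w - (1 + t) ^ 2) := by
        rw [mul_sum]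
        refine sum_congr rfl fun w _ => ?_
        rw [show (1 + t) ^ 2 - w = -1 * (w - (1 + t) ^ 2) by ring, map_mul]
        ring
    _ = φ (-1) * H₂ p (4 * t / (1 + t) ^ 2) := by
        rw [sum_apply_mul_apply_sub_mul_apply_sub_eq_H₂ (mul_ne_zero h4 ht0) (pow_ne_zero 2 hu),
          sq, map_mul, (Φ_isQuadratic p).apply_mul_self hu, one_mul]

theorem sum_filter_ne_neg_one_mul_H₂ (hp : Odd p) :
    ∑ t ∈ univ.filter (· ≠ -1), φ t * H₂ p (4 * t / (1 + t) ^ 2) =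
      φ (-1) + H₃ p 1 := by
  have hF := ringChar_zmod_ne_two hp
  have h2 : (2 : ZMod p) ≠ 0 := Ring.two_ne_zero hF
  calc ∑ t ∈ univ.filter (· ≠ -1), φ t * H₂ p (4 * t / (1 + t) ^ 2)
      = ∑ r ∈ univ.filter (· ≠ -1), φ (1 - r ^ 2) * H₂ p (1 - r ^ 2) := by
        rw [← sum_filter_ne_neg_one_comp_one_sub_div_one_add hF]
        refine sum_congr rfl fun r hr => ?_
        have hr : 1 + r ≠ 0 := fun h => (mem_filter.mp hr).2 (by linear_combination h)
        rw [show 1 + (1 - r) / (1 + r) = 2 / (1 + r) by field_simp; ring,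
          show 4 * ((1 - r) / (1 + r)) / (2 / (1 + r)) ^ 2 = 1 - r ^ 2 by field_simp; ring,
          div_eq_mul_inv, map_mul, (Φ_isQuadratic p).apply_inv, ← map_mul,
          show (1 - r) * (1 + r) = 1 - r ^ 2 by ring]
    _ = ∑ r, φ (1 - r ^ 2) * H₂ p (1 - r ^ 2) := by
        refine sum_filter_of_ne fun r _ h => ?_
        rintro rfl
        exact h (by norm_num)
    _ = ∑ w, (1 + φ w) * (φ (1 - w) * H₂ p (1 - w)) :=
        sum_comp_sq φ hF (fun _ => rfl) fun w => φ (1 - w) * H₂ p (1 - w)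
    _ = ∑ v, (1 + φ (1 - v)) * (φ v * H₂ p v) := by
        rw [← sum_comp_mul_add (neg_ne_zero.mpr one_ne_zero) 1]
        refine sum_congr rfl fun v _ => ?_
        rw [show 1 - (-1 * v + 1) = v by ring, show -1 * v + 1 = 1 - v by ring]
    _ = φ (-1) + H₃ p 1 := by
        simp only [add_mul, one_mul, sum_add_distrib, sum_apply_mul_H₂ hp, H₃]
        exact congrArg _ (sum_congr rfl fun v _ => by ring)

theorem sum_mul_sum_mul_sub_four_mul_mul_one_add_sq_sub (hp : Odd p) :
    ∑ t, φ t * ∑ w, φ w * (φ (w - 4 * t) * φ ((1 + t) ^ 2 - w)) = φ (-1) * H₃ p 1 := by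
  have hχ := Φ_isQuadratic p
  have h2 : (2 : ZMod p) ≠ 0 := Ring.two_ne_zero (ringChar_zmod_ne_two hp)
  have hH₂ : ∀ t ≠ -1, φ t * ∑ w, φ w * (φ (w - 4 * t) * φ ((1 + t) ^ 2 - w))
      = φ (-1) * (φ t * H₂ p (4 * t / (1 + t) ^ 2)) := by
    intro t ht1
    rcases eq_or_ne t 0 with rfl | ht0
    · simp
    · rw [sum_mul_sub_four_mul_mul_one_add_sq_sub_eq_H₂ hp ht0 ht1]
      ring
  have hoff : ∀ w ≠ 0,
      φ w * (φ (w - 4 * -1) * φ ((1 + -1) ^ 2 - w)) = φ (w + 4) * φ (-1) := by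
    intro w hw
    rw [show (1 + -1 : ZMod p) ^ 2 - w = -1 * w by ring, show w - 4 * -1 = w + 4 by ring,
      map_mul]
    linear_combination φ (w + 4) * φ (-1) * hχ.apply_mul_self hw
  have hneg : ∑ w, φ w * (φ (w - 4 * -1) * φ ((1 + -1) ^ 2 - w)) = -φ (-1) := by
    rw [sum_eq_apply_sub_of_forall_ne φ (Φ_ne_one hp) hoff, zero_add,
      show (4 : ZMod p) = 2 * 2 by norm_num, map_mul, hχ.apply_mul_self h2]
    simp
  rw [← add_sum_erase _ _ (mem_univ (-1)), hneg, ← filter_ne',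
    sum_congr rfl fun t ht => hH₂ t (mem_filter.mp ht).2, ← mul_sum,
    sum_filter_ne_neg_one_mul_H₂ hp]
  ring

theorem sum_sum_discrim_mul_mul_one_sub_add_mul_one_add_add (hp : Odd p) :
    ∑ s, ∑ t, φ (s ^ 2 - 4 * t) * (φ t * (φ (1 - s + t) * φ (1 + s + t)))
      = p * φ (-1) + φ (-1) * H₃ p 1 := by
  calc ∑ s, ∑ t, φ (s ^ 2 - 4 * t) * (φ t * (φ (1 - s + t) * φ (1 + s + t)))
      = ∑ t, φ t * ∑ s, φ (s ^ 2 - 4 * t) * φ ((1 + t) ^ 2 - s ^ 2) := by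
        rw [sum_comm]
        refine sum_congr rfl fun t _ => ?_
        rw [mul_sum]
        refine sum_congr rfl fun s _ => ?_
        rw [show (1 + t) ^ 2 - s ^ 2 = (1 - s + t) * (1 + s + t) by ring, map_mul]
        ring
    _ = ∑ t, φ t * ∑ w, (1 + φ w) * (φ (w - 4 * t) * φ ((1 + t) ^ 2 - w)) := by
        refine sum_congr rfl fun t _ => ?_
        rw [sum_comp_sq φ (ringChar_zmod_ne_two hp) (fun _ => rfl)
          fun w => φ (w - 4 * t) * φ ((1 + t) ^ 2 - w)]
    _ = p * φ (-1) + φ (-1) * H₃ p 1 := by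
        simp only [add_mul, one_mul, sum_add_distrib, mul_add]
        rw [sum_mul_sum_apply_sub_four_mul_mul_apply_one_add_sq_sub (Φ_isQuadratic p)
          (Φ_ne_one hp), sum_mul_sum_mul_sub_four_mul_mul_one_add_sq_sub hp, ZMod.card]

theorem H₂_neg_one_sq (hp : Odd p) : H₂ p (-1) ^ 2 = p + p * φ (-1) + φ (-1) * H₃ p 1 := by
  have hF := ringChar_zmod_ne_two hp
  calc H₂ p (-1) ^ 2
      = ∑ u, ∑ v, φ (u * v) * (φ (1 - (u + v) + u * v) * φ (1 + (u + v) + u * v)) := by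
        rw [H₂, sq, sum_mul_sum]
        refine sum_congr rfl fun u _ => sum_congr rfl fun v _ => ?_
        rw [show 1 - (u + v) + u * v = (1 - u) * (1 - v) by ring,
          show 1 + (u + v) + u * v = (1 - -1 * u) * (1 - -1 * v) by ring]
        simp only [map_mul]
        ring
    _ = ∑ s, ∑ t, (1 + φ (s ^ 2 - 4 * t)) * (φ t * (φ (1 - s + t) * φ (1 + s + t))) :=
        sum_sum_add_mul φ hF (fun _ => rfl) fun s t => φ t * (φ (1 - s + t) * φ (1 + s + t))
    _ = p + p * φ (-1) + φ (-1) * H₃ p 1 := by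
        simp only [add_mul, one_mul, sum_add_distrib]
        rw [sum_sum_mul_one_sub_add_mul_one_add_add (Φ_isQuadratic p) (Φ_ne_one hp) hF,
          sum_sum_discrim_mul_mul_one_sub_add_mul_one_add_add hp, ZMod.card]
        ring

theorem Fsum_one (hp : Odd p) : Fsum p 1 = p + φ (-1) * H₃ p 1 := by
  have hF := ringChar_zmod_ne_two hp
  calc Fsum p 1 = ∑ x, ∑ y, φ (x * y) * (φ (x + y + 2) * φ (x + y + 2 * (x * y))) := by
        rw [Fsum_eq_sum_sum, inv_one, one_add_one_eq_two]
        exact sum_congr rfl fun x _ => sum_congr rfl fun y _ => by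
          rw [add_assoc (x + y), one_add_one_eq_two]
    _ = ∑ s, ∑ q, (1 + φ (s ^ 2 - 4 * q)) * (φ q * (φ (s + 2) * φ (s + 2 * q))) :=
        sum_sum_add_mul φ hF (fun _ => rfl) fun s q => φ q * (φ (s + 2) * φ (s + 2 * q))
    _ = p + φ (-1) * H₃ p 1 := by
        simp only [add_mul, one_mul, sum_add_distrib]
        rw [sum_sum_mul_add_two_mul_add_two_mul (Φ_isQuadratic p) (Φ_ne_one hp) hF,
          sum_sum_discrim_mul_mul_add_two_mul_add_two_mul hp, ZMod.card]

theorem Fsum_neg_one (hp : Odd p) : Fsum p (-1) = -φ (-1) * (p - 1) := by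
  have h := sum_sum_apply_mul_mul_apply_add_mul_self (Φ_isQuadratic p) (Φ_ne_one hp)
  rw [ZMod.card] at h
  rw [Fsum_eq_sum_sum, inv_neg, inv_one, neg_add_cancel, ← h]
  simp only [neg_add_cancel_right, zero_mul, add_zero]

end

/-- **Lemma (DGP, Lemma 3.3).** `F(1) = H₂(-1)² - p φ(-1)` and
`F(-1) = φ(-1) H₂(1)² - p φ(-1)`. -/
theorem F_at_one_and_neg_one (p : ℕ) [Fact p.Prime] (hp : Odd p) :
    Fsum p 1 = (H₂ p (-1)) ^ 2 - p * Φ p (-1) ∧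
    Fsum p (-1) = Φ p (-1) * (H₂ p 1) ^ 2 - p * Φ p (-1) := by
  refine ⟨?_, ?_⟩
  · rw [Fsum_one hp, H₂_neg_one_sq hp]
    ring
  · rw [Fsum_neg_one hp, H₂_one hp]
    ring
end

section
/- Let p be an odd prime. Then Σ_{a ∈ 𝔽_p^×} φ(a)K(a)⁴ − 3p·Σ_{a ∈ 𝔽_p^×} φ(a)K(a)² = p² + p·Σ_{x ∈ 𝔽_p^×} φ(x)·H₂(x)²; equivalently, T_{4,φ}/p = p + p²·Σ_{x ∈ 𝔽_p^×} φ(x)·₂F₁(φ,φ;ε|x)². -/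
open Finset

/-- The standard additive character `x ↦ e^(2πi x̃ / p)` of `ZMod p`. -/
noncomputable def θ (p : ℕ) (x : ZMod p) : ℂ :=
  Complex.exp (2 * Real.pi * Complex.I * (x.val : ℂ) / p)

/-- The Kloosterman sum `K(a) = Σ_{x ∈ 𝔽_p^×} θ(x + a x⁻¹)`. -/
noncomputable def K (p : ℕ) [Fact p.Prime] (a : ZMod p) : ℂ :=
  ∑ x ∈ univ.filter (fun x : ZMod p => x ≠ 0), θ p (x + a * x⁻¹)

/-!
Write `q = #F`, `χ` for the quadratic character and `H(x) = ∑ u, χ u χ (1 - u) χ (1 - x u)`.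
Substituting `y = x t` and then `u = x (1 + t)` in `K(a)²` turns the inner sum into
`K(a (1 + t)² / t)`; the `t` with `(1 + t)² / t = c` are the roots of `t² + (2 - c) t + 1`, whose
number is `1 + χ(c (c - 4))`, so that `K(a)² = q + ∑ c, χ(c (c - 4)) K(a c)` for `a ≠ 0`.
Expanding `K(a) K(a b)` and evaluating the sum over `a` as a twisted Gauss sum gives
`∑ a, χ a K(a) K(a b) = q H(b)`; for `b = 1` this is the second moment `-q`.
Squaring the formula for `K(a)²`, the fourth moment `∑ a, χ a (K(a)² - q)²` becomes
`q ∑ b, χ b H(b) ∑ c, χ c χ(c - 4) χ(b c - 4)`, and the inner sum is `H(b)` again (put `c = 4 u`).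
-/

namespace MulChar.IsQuadratic

variable {F R : Type*} [Field F] [CommRing R] {χ : MulChar F R}

lemma apply_mul_self_s12 (hχ : χ.IsQuadratic) {a : F} (ha : a ≠ 0) : χ a * χ a = 1 := by
  rw [← sq, ← pow_apply' χ two_ne_zero, hχ.sq_eq_one, one_apply ha.isUnit]

lemma apply_pow_three (hχ : χ.IsQuadratic) (a : F) : χ a ^ 3 = χ a := by
  rw [← pow_apply' χ three_ne_zero, hχ.pow_odd (by decide)]

lemma apply_inv_s12 (hχ : χ.IsQuadratic) (a : F) : χ a⁻¹ = χ a := by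
  rw [← inv_apply', hχ.inv]

end MulChar.IsQuadratic

section FilterNeZero

variable {G₀ M : Type*} [Fintype G₀] [DecidableEq G₀] [AddCommMonoid M]

lemma sum_filter_ne_zero_of_map_zero [Zero G₀] {f : G₀ → M} (hf : f 0 = 0) :
    ∑ x ∈ univ.filter (· ≠ 0), f x = ∑ x, f x :=
  sum_filter_of_ne fun _ _ hx h => hx (h ▸ hf)

lemma sum_filter_ne_zero_mul_left [GroupWithZero G₀] {c : G₀} (hc : c ≠ 0) (f : G₀ → M) :
    ∑ x ∈ univ.filter (· ≠ 0), f (c * x) = ∑ x ∈ univ.filter (· ≠ 0), f x := by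
  rw [sum_filter, sum_filter]
  exact Fintype.sum_bijective (c * ·) (mulLeft_bijective₀ c hc) _ _ fun x => by simp [hc]

end FilterNeZero

section CharacterSums

variable {F R : Type*} [Field F] [Fintype F] [CommRing R] [IsDomain R]

lemma sum_mul_addChar_mul {χ : MulChar F R} (hχ : χ.IsQuadratic) (hχ₁ : χ ≠ 1)
    (ψ : AddChar F R) (s : F) :
    ∑ a, χ a * ψ (a * s) = χ s * gaussSum χ ψ := by
  rcases eq_or_ne s 0 with rfl | hs
  · simp [MulChar.sum_eq_zero_of_ne_one hχ₁, MulChar.map_zero]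
  · rw [gaussSum, mul_sum]
    refine Fintype.sum_bijective (· * s) (mulRight_bijective₀ s hs) _ _ fun a => ?_
    rw [map_mul χ]
    linear_combination (-(χ a * ψ (a * s))) * hχ.apply_mul_self_s12 hs

variable [DecidableEq F]

lemma sum_addChar_mul_eq_ite {ψ : AddChar F R} (hψ : ψ.IsPrimitive) (b : F) :
    ∑ x ∈ univ.filter (· ≠ 0), ψ (x * b) = (if b = 0 then (Fintype.card F : R) else 0) - 1 := by
  have h := AddChar.sum_mulShift b hψ
  rw [← sum_filter_add_sum_filter_not univ (· ≠ 0)] at h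
  simp only [ne_eq, Decidable.not_not, filter_eq', mem_univ, ↓reduceIte, sum_singleton, zero_mul,
    AddChar.map_zero_eq_one, Nat.cast_ite, Nat.cast_zero] at h
  exact eq_sub_of_add_eq h

end CharacterSums

lemma card_roots_quadratic {F : Type*} [Field F] [Fintype F] [DecidableEq F]
    (hF : ringChar F ≠ 2) (b d : F) :
    (#{x | x ^ 2 + b * x + d = 0} : ℤ) = 1 + quadraticChar F (b ^ 2 - 4 * d) := by
  have h2 : (2 : F) ≠ 0 := Ring.two_ne_zero hF
  rw [add_comm, ← quadraticChar_card_sqrts hF]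
  congr 1
  -- completing the square: `x ↦ 2 x + b` maps the roots onto the square roots of `b² - 4 d`
  refine card_nbij' (fun x => 2 * x + b) (fun w => (w - b) / 2) ?_ ?_ ?_ ?_
  · intro x hx
    simp only [coe_filter, mem_univ, true_and, Set.mem_ofPred_eq, Set.toFinset_ofPred] at hx ⊢
    linear_combination 4 * hx
  · intro w hw
    simp only [coe_filter, mem_univ, true_and, Set.mem_ofPred_eq, Set.toFinset_ofPred] at hw ⊢
    field_simp
    linear_combination hw
  · intro x _
    field_simp
    ring
  · intro w _
    field_simp
    ring

section Kloosterman

variable {F R : Type*} [Field F] [Fintype F] [DecidableEq F] [CommRing R]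

def kloosterman (ψ : AddChar F R) (a : F) : R :=
  ∑ x ∈ univ.filter (· ≠ 0), ψ (x + a * x⁻¹)

noncomputable def quadraticCharIn (F R : Type*) [Field F] [Fintype F] [DecidableEq F]
    [CommRing R] : MulChar F R :=
  (quadraticChar F).ringHomComp (Int.castRingHom R)

lemma quadraticCharIn_isQuadratic : (quadraticCharIn F R).IsQuadratic :=
  (quadraticChar_isQuadratic F).comp _

lemma quadraticCharIn_ne_one [Nontrivial R] (hF : ringChar F ≠ 2) (hR : ringChar R ≠ 2) :
    quadraticCharIn F R ≠ 1 := by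
  obtain ⟨a, ha⟩ := quadraticChar_exists_neg_one' hF
  intro h
  have h' := congrArg (fun χ : MulChar F R => χ a) h
  simp only [quadraticCharIn, MulChar.ringHomComp_apply, ha, MulChar.one_apply_coe,
    Int.cast_neg, Int.cast_one, eq_intCast] at h'
  exact Ring.neg_one_ne_one_of_char_ne_two hR h'

lemma sum_comp_one_add_sq_mul_inv (hF : ringChar F ≠ 2) (f : F → R) :
    ∑ t ∈ univ.filter (· ≠ 0), f ((1 + t) ^ 2 * t⁻¹) =
      ∑ c, (1 + quadraticCharIn F R (c * (c - 4))) * f c := by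
  rw [← sum_fiberwise' _ (fun t => (1 + t) ^ 2 * t⁻¹) f]
  refine sum_congr rfl fun c _ => ?_
  have hfiber : (univ.filter (· ≠ 0)).filter (fun t : F => (1 + t) ^ 2 * t⁻¹ = c) =
      univ.filter (fun t => t ^ 2 + (2 - c) * t + 1 = 0) := by
    ext t
    simp only [filter_filter, mem_filter, mem_univ, true_and]
    constructor
    · rintro ⟨ht, rfl⟩
      field_simp
      ring
    · intro h
      have ht : t ≠ 0 := by rintro rfl; simp at h
      refine ⟨ht, ?_⟩
      field_simp
      linear_combination h
  have hcount := congrArg (Int.cast : ℤ → R) (card_roots_quadratic hF (2 - c) 1)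
  rw [show (2 - c) ^ 2 - 4 * 1 = c * (c - 4) by ring] at hcount
  push_cast at hcount
  rw [sum_const, nsmul_eq_mul, hfiber, hcount]
  rfl

variable [IsDomain R] {ψ : AddChar F R}

lemma kloosterman_zero (hψ : ψ.IsPrimitive) : kloosterman ψ 0 = -1 := by
  simpa [kloosterman] using sum_addChar_mul_eq_ite hψ 1

lemma sum_kloosterman_mul (hψ : ψ.IsPrimitive) {a : F} (ha : a ≠ 0) :
    ∑ c, kloosterman ψ (a * c) = 0 := by
  simp only [kloosterman, AddChar.map_add_eq_mul]
  rw [sum_comm]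
  refine sum_eq_zero fun x hx => ?_
  have hx : a * x⁻¹ ≠ 0 := mul_ne_zero ha (inv_ne_zero (mem_filter.mp hx).2)
  have h := AddChar.sum_mulShift (a * x⁻¹) hψ
  rw [if_neg hx, Nat.cast_zero] at h
  rw [← mul_sum, sum_congr rfl fun c _ => congrArg ψ (by ring : a * c * x⁻¹ = c * (a * x⁻¹)), h,
    mul_zero]

lemma sum_addChar_mul_addChar_eq_kloosterman (hψ : ψ.IsPrimitive) (a : F) {t : F} (ht : t ≠ 0) :
    ∑ x ∈ univ.filter (· ≠ 0), ψ (x + a * x⁻¹) * ψ (x * t + a * (x * t)⁻¹) =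
      kloosterman ψ (a * ((1 + t) ^ 2 * t⁻¹)) + if t = -1 then (Fintype.card F : R) else 0 := by
  rcases eq_or_ne t (-1) with rfl | ht₁
  · have h := sum_addChar_mul_eq_ite hψ 0
    rw [if_pos rfl] at h
    rw [if_pos rfl, add_neg_cancel, zero_pow two_ne_zero, zero_mul, mul_zero, kloosterman_zero hψ,
      neg_add_eq_sub, ← h]
    refine sum_congr rfl fun x _ => ?_
    rw [← AddChar.map_add_eq_mul]
    congr 1
    ring
  · have h₁ : 1 + t ≠ 0 := fun h => ht₁ (by linear_combination h)
    rw [if_neg ht₁, add_zero, kloosterman,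
      ← sum_filter_ne_zero_mul_left h₁ fun u => ψ (u + a * ((1 + t) ^ 2 * t⁻¹) * u⁻¹)]
    refine sum_congr rfl fun x hx => ?_
    have hx : x ≠ 0 := (mem_filter.mp hx).2
    rw [← AddChar.map_add_eq_mul]
    congr 1
    field_simp
    ring

lemma kloosterman_sq (hF : ringChar F ≠ 2) (hψ : ψ.IsPrimitive) {a : F} (ha : a ≠ 0) :
    kloosterman ψ a ^ 2 = Fintype.card F +
      ∑ c, quadraticCharIn F R (c * (c - 4)) * kloosterman ψ (a * c) := by
  have hmem : (-1 : F) ∈ univ.filter (· ≠ 0) := by simp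
  calc kloosterman ψ a ^ 2
      = ∑ x ∈ univ.filter (· ≠ 0), ∑ y ∈ univ.filter (· ≠ 0),
          ψ (x + a * x⁻¹) * ψ (y + a * y⁻¹) := by rw [sq, kloosterman, sum_mul_sum]
    _ = ∑ t ∈ univ.filter (· ≠ 0), ∑ x ∈ univ.filter (· ≠ 0),
          ψ (x + a * x⁻¹) * ψ (x * t + a * (x * t)⁻¹) := by
        refine (sum_congr rfl fun x hx => ?_).trans sum_comm
        exact (sum_filter_ne_zero_mul_left (mem_filter.mp hx).2 fun y => _).symm
    _ = ∑ t ∈ univ.filter (· ≠ 0),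
          (kloosterman ψ (a * ((1 + t) ^ 2 * t⁻¹)) + if t = -1 then (Fintype.card F : R) else 0) :=
        sum_congr rfl fun t ht => sum_addChar_mul_addChar_eq_kloosterman hψ a (mem_filter.mp ht).2
    _ = Fintype.card F + ∑ c, quadraticCharIn F R (c * (c - 4)) * kloosterman ψ (a * c) := by
        rw [sum_add_distrib, sum_comp_one_add_sq_mul_inv hF fun c => kloosterman ψ (a * c),
          sum_ite_eq' _ _ _, if_pos hmem]
        simp only [add_mul, one_mul, sum_add_distrib, sum_kloosterman_mul hψ ha]
        ring

end Kloosterman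

section Hypergeometric

variable {F R : Type*} [Field F] [Fintype F] [CommRing R] {χ : MulChar F R}

def hypergeometricSum (χ : MulChar F R) (x : F) : R :=
  ∑ u, χ u * χ (1 - u) * χ (1 - x * u)

lemma sum_mul_sub_four_eq_hypergeometricSum (hF : ringChar F ≠ 2) (hχ : χ.IsQuadratic) (b : F) :
    ∑ c, χ c * χ (c - 4) * χ (b * c - 4) = hypergeometricSum χ b := by
  have h2 : (2 : F) ≠ 0 := Ring.two_ne_zero hF
  have h4 : (4 : F) = 2 * 2 := by norm_num
  have hχ4 : χ 4 = 1 := by rw [h4, map_mul, hχ.apply_mul_self_s12 h2]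
  have hχ4' : χ (-4) * χ (-4) = 1 :=
    hχ.apply_mul_self_s12 (neg_ne_zero.mpr (h4 ▸ mul_ne_zero h2 h2))
  refine (Fintype.sum_bijective (4 * ·) (mulLeft_bijective₀ 4 (h4 ▸ mul_ne_zero h2 h2)) _ _
    fun u => ?_).symm
  rw [show 4 * u - 4 = -4 * (1 - u) by ring, show b * (4 * u) - 4 = -4 * (1 - b * u) by ring,
    map_mul χ 4, map_mul χ (-4), map_mul χ (-4), hχ4]
  linear_combination (-(χ u * χ (1 - u) * χ (1 - b * u))) * hχ4'

variable [IsDomain R] [DecidableEq F] {ψ : AddChar F R}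

lemma hypergeometricSum_one (hχ : χ.IsQuadratic) (hχ₁ : χ ≠ 1) : hypergeometricSum χ 1 = -1 := by
  have h : ∀ u : F, χ u * χ (1 - u) * χ (1 - 1 * u) = χ u - if u = 1 then 1 else 0 := by
    intro u
    rcases eq_or_ne u 1 with rfl | hu
    · simp [MulChar.map_zero]
    · rw [one_mul, mul_assoc, hχ.apply_mul_self_s12 (sub_ne_zero.mpr hu.symm), if_neg hu]
      ring
  simp only [hypergeometricSum, h, sum_sub_distrib, MulChar.sum_eq_zero_of_ne_one hχ₁,
    sum_ite_eq', mem_univ, if_true, zero_sub]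

lemma sum_mul_kloosterman_mul_kloosterman_eq (hχ : χ.IsQuadratic) (hχ₁ : χ ≠ 1) (b : F) :
    ∑ a, χ a * (kloosterman ψ a * kloosterman ψ (a * b)) = gaussSum χ ψ *
      ∑ x ∈ univ.filter (· ≠ 0), ∑ y ∈ univ.filter (· ≠ 0), ψ (x + y) * χ (x⁻¹ + b * y⁻¹) := by
  have hexp : ∀ a x y : F, ψ (x + a * x⁻¹) * ψ (y + a * b * y⁻¹) =
      ψ (x + y) * ψ (a * (x⁻¹ + b * y⁻¹)) := fun a x y => by
    rw [← AddChar.map_add_eq_mul, ← AddChar.map_add_eq_mul]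
    congr 1
    ring
  calc ∑ a, χ a * (kloosterman ψ a * kloosterman ψ (a * b))
      = ∑ x ∈ univ.filter (· ≠ 0), ∑ y ∈ univ.filter (· ≠ 0),
          ∑ a, ψ (x + y) * (χ a * ψ (a * (x⁻¹ + b * y⁻¹))) := by
        simp_rw [kloosterman, sum_mul_sum, mul_sum]
        rw [sum_comm]
        refine sum_congr rfl fun x _ => ?_
        rw [sum_comm]
        refine sum_congr rfl fun y _ => sum_congr rfl fun a _ => ?_
        rw [hexp]
        ring
    _ = _ := by
        simp_rw [← mul_sum, sum_mul_addChar_mul hχ hχ₁, mul_sum]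
        exact sum_congr rfl fun x _ => sum_congr rfl fun y _ => by ring

lemma sum_sum_addChar_mul_char_eq_hypergeometricSum (hχ : χ.IsQuadratic) (hχ₁ : χ ≠ 1) {b : F}
    (hb : b ≠ 0) :
    ∑ x ∈ univ.filter (· ≠ 0), ∑ y ∈ univ.filter (· ≠ 0), ψ (x + y) * χ (x⁻¹ + b * y⁻¹) =
      χ (-1) * gaussSum χ ψ * hypergeometricSum χ b := by
  -- substitute `y = -b x u`
  have hinner : ∀ x ∈ univ.filter (· ≠ 0),
      ∑ y ∈ univ.filter (· ≠ 0), ψ (x + y) * χ (x⁻¹ + b * y⁻¹) =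
        ∑ u ∈ univ.filter (· ≠ 0), χ u * χ (u - 1) * (χ x * ψ (x * (1 - b * u))) := by
    intro x hx
    have hx : x ≠ 0 := (mem_filter.mp hx).2
    rw [← sum_filter_ne_zero_mul_left (mul_ne_zero (neg_ne_zero.mpr hb) hx)]
    refine sum_congr rfl fun u hu => ?_
    have hu : u ≠ 0 := (mem_filter.mp hu).2
    rw [show x + -b * x * u = x * (1 - b * u) by ring,
      show x⁻¹ + b * (-b * x * u)⁻¹ = x⁻¹ * u⁻¹ * (u - 1) by field_simp; ring,
      map_mul χ, map_mul χ, hχ.apply_inv_s12, hχ.apply_inv_s12]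
    ring
  rw [sum_congr rfl hinner, sum_comm, hypergeometricSum, mul_sum,
    ← sum_filter_ne_zero_of_map_zero (by simp [MulChar.map_zero])]
  refine sum_congr rfl fun u _ => ?_
  rw [← mul_sum, sum_filter_ne_zero_of_map_zero (by simp [MulChar.map_zero]),
    sum_mul_addChar_mul hχ hχ₁, show u - 1 = -1 * (1 - u) by ring, map_mul χ (-1)]
  ring

lemma sum_mul_kloosterman_mul_kloosterman (hχ : χ.IsQuadratic) (hχ₁ : χ ≠ 1)
    (hψ : ψ.IsPrimitive) {b : F} (hb : b ≠ 0) :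
    ∑ a, χ a * (kloosterman ψ a * kloosterman ψ (a * b)) =
      Fintype.card F * hypergeometricSum χ b := by
  rw [sum_mul_kloosterman_mul_kloosterman_eq hχ hχ₁,
    sum_sum_addChar_mul_char_eq_hypergeometricSum hχ hχ₁ hb]
  linear_combination (χ (-1) * hypergeometricSum χ b) * gaussSum_sq hχ₁ hχ hψ +
    Fintype.card F * hypergeometricSum χ b * hχ.apply_mul_self_s12 (neg_ne_zero.mpr one_ne_zero)

lemma sum_mul_kloosterman_mul_mul_kloosterman_mul (hχ : χ.IsQuadratic) (hχ₁ : χ ≠ 1)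
    (hψ : ψ.IsPrimitive) {b c : F} (hb : b ≠ 0) (hc : c ≠ 0) :
    ∑ a, χ a * (kloosterman ψ (a * c) * kloosterman ψ (a * (b * c))) =
      χ c * (Fintype.card F * hypergeometricSum χ b) := by
  rw [← sum_mul_kloosterman_mul_kloosterman hχ hχ₁ hψ hb, mul_sum]
  refine Fintype.sum_bijective (· * c) (mulRight_bijective₀ c hc) _ _ fun a => ?_
  rw [map_mul χ, show a * c * b = a * (b * c) by ring]
  linear_combination (-(χ a * (kloosterman ψ (a * c) * kloosterman ψ (a * (b * c))))) *
    hχ.apply_mul_self_s12 hc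

lemma sum_mul_kloosterman_sq (hχ : χ.IsQuadratic) (hχ₁ : χ ≠ 1) (hψ : ψ.IsPrimitive) :
    ∑ a, χ a * kloosterman ψ a ^ 2 = -Fintype.card F := by
  have h := sum_mul_kloosterman_mul_kloosterman hχ hχ₁ hψ (one_ne_zero (α := F))
  simp only [mul_one, hypergeometricSum_one hχ hχ₁] at h
  simpa [sq] using h

end Hypergeometric

section FourthMoment

variable {F R : Type*} [Field F] [Fintype F] [DecidableEq F] [CommRing R] [IsDomain R]
variable {ψ : AddChar F R}

lemma sum_mul_kloosterman_sq_sub_card_sq (hF : ringChar F ≠ 2) (hR : ringChar R ≠ 2)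
    (hψ : ψ.IsPrimitive) :
    ∑ a, quadraticCharIn F R a * (kloosterman ψ a ^ 2 - Fintype.card F) ^ 2 =
      Fintype.card F *
        ∑ b, quadraticCharIn F R b * hypergeometricSum (quadraticCharIn F R) b ^ 2 := by
  set χ := quadraticCharIn F R
  set q : R := (Fintype.card F : R)
  have hχ : χ.IsQuadratic := quadraticCharIn_isQuadratic
  have hχ₁ : χ ≠ 1 := quadraticCharIn_ne_one hF hR
  set w : F → R := fun c => χ (c * (c - 4)) with hw
  have hw₀ : w 0 = 0 := by simp [hw, MulChar.map_zero]
  have hterm : ∀ b c, w c * w (b * c) *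
      ∑ a, χ a * (kloosterman ψ (a * c) * kloosterman ψ (a * (b * c))) =
      q * (χ b * hypergeometricSum χ b) * (χ c * χ (c - 4) * χ (b * c - 4)) := by
    intro b c
    rcases eq_or_ne c 0 with rfl | hc
    · simp [hw₀, MulChar.map_zero]
    rcases eq_or_ne b 0 with rfl | hb
    · simp [hw₀, MulChar.map_zero]
    simp only [sum_mul_kloosterman_mul_mul_kloosterman_mul hχ hχ₁ hψ hb hc, hw, map_mul χ]
    linear_combination (q * hypergeometricSum χ b * χ b * χ (c - 4) * χ (b * c - 4)) *
      hχ.apply_pow_three c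
  calc ∑ a, χ a * (kloosterman ψ a ^ 2 - q) ^ 2
      = ∑ a, χ a * ((∑ c, w c * kloosterman ψ (a * c)) * ∑ d, w d * kloosterman ψ (a * d)) := by
        refine sum_congr rfl fun a _ => ?_
        rcases eq_or_ne a 0 with rfl | ha
        · simp [MulChar.map_zero]
        · rw [kloosterman_sq hF hψ ha]
          ring
    _ = ∑ c, ∑ d, w c * w d *
          ∑ a, χ a * (kloosterman ψ (a * c) * kloosterman ψ (a * d)) := by
        simp_rw [sum_mul_sum, mul_sum]
        rw [sum_comm]
        refine sum_congr rfl fun c _ => ?_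
        rw [sum_comm]
        exact sum_congr rfl fun d _ => sum_congr rfl fun a _ => by ring
    _ = ∑ c, ∑ b, w c * w (b * c) *
          ∑ a, χ a * (kloosterman ψ (a * c) * kloosterman ψ (a * (b * c))) := by
        refine sum_congr rfl fun c _ => ?_
        rcases eq_or_ne c 0 with rfl | hc
        · simp [hw₀]
        · exact (Fintype.sum_bijective (· * c) (mulRight_bijective₀ c hc) _ _ fun b => rfl).symm
    _ = q * ∑ b, χ b * hypergeometricSum χ b ^ 2 := by
        simp_rw [hterm]
        rw [sum_comm, mul_sum]
        refine sum_congr rfl fun b _ => ?_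
        rw [← mul_sum, sum_mul_sub_four_eq_hypergeometricSum hF hχ]
        ring

theorem sum_mul_kloosterman_pow_four_sub (hF : ringChar F ≠ 2) (hR : ringChar R ≠ 2)
    (hψ : ψ.IsPrimitive) :
    ∑ a, quadraticCharIn F R a * kloosterman ψ a ^ 4 -
        3 * Fintype.card F * ∑ a, quadraticCharIn F R a * kloosterman ψ a ^ 2 =
      (Fintype.card F : R) ^ 2 + Fintype.card F *
        ∑ x, quadraticCharIn F R x * hypergeometricSum (quadraticCharIn F R) x ^ 2 := by
  set χ := quadraticCharIn F R
  set q : R := (Fintype.card F : R)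
  have hχ₁ : χ ≠ 1 := quadraticCharIn_ne_one hF hR
  have hsplit : ∑ a, χ a * kloosterman ψ a ^ 4 = ∑ a, χ a * (kloosterman ψ a ^ 2 - q) ^ 2 +
      2 * q * ∑ a, χ a * kloosterman ψ a ^ 2 - q ^ 2 * ∑ a, χ a := by
    rw [mul_sum, mul_sum, ← sum_add_distrib, ← sum_sub_distrib]
    exact sum_congr rfl fun a _ => by ring
  rw [hsplit, sum_mul_kloosterman_sq_sub_card_sq hF hR hψ,
    sum_mul_kloosterman_sq quadraticCharIn_isQuadratic hχ₁ hψ, MulChar.sum_eq_zero_of_ne_one hχ₁]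
  ring

end FourthMoment

lemma theta_eq_stdAddChar (p : ℕ) [Fact p.Prime] : θ p = ZMod.stdAddChar := by
  funext x
  rw [ZMod.stdAddChar_apply, ZMod.toCircle_apply]
  rfl

/-- **`T₄,φ` via hypergeometric values.**
`Σ_{a≠0} φ(a)K(a)⁴ - 3p Σ_{a≠0} φ(a)K(a)² = p² + p Σ_{x≠0} φ(x) H₂(x)²`. -/
theorem T4_eq_hypergeometric_sum (p : ℕ) [Fact p.Prime] (hp : Odd p) :
    ∑ a ∈ univ.filter (fun a : ZMod p => a ≠ 0), Φ p a * K p a ^ 4 -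
        3 * p * ∑ a ∈ univ.filter (fun a : ZMod p => a ≠ 0), Φ p a * K p a ^ 2 =
      (p : ℂ) ^ 2 + p * ∑ x ∈ univ.filter (fun x : ZMod p => x ≠ 0),
        Φ p x * (H₂ p x) ^ 2 := by
  have hF : ringChar (ZMod p) ≠ 2 := by
    rw [ZMod.ringChar_zmod_n]
    rintro rfl
    exact Nat.not_odd_iff_even.mpr even_two hp
  have hK : K p = kloosterman ZMod.stdAddChar := by
    funext a
    simp only [K, kloosterman, theta_eq_stdAddChar]
  have h := sum_mul_kloosterman_pow_four_sub hF (by rw [ringChar.eq_zero]; decide)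
    (ZMod.isPrimitive_stdAddChar p)
  rw [ZMod.card] at h
  rw [hK, sum_filter_ne_zero_of_map_zero (by simp [MulChar.map_zero]),
    sum_filter_ne_zero_of_map_zero (by simp [MulChar.map_zero]),
    sum_filter_ne_zero_of_map_zero (by simp [MulChar.map_zero])]
  -- `Φ p` and `H₂ p` unfold to `quadraticCharIn (ZMod p) ℂ` and `hypergeometricSum (Φ p)`
  exact h
end
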